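/- Let L be an e-cyclic residuated lattice, let (H_i)_{i ∈ I} be a family of convex subalgebras of L, and let K = C[⋃_{i ∈ I} H_i] be their join in the lattice of convex subalgebras. For a convex subalgebra H define Θ_H = {(a, b) ∈ L × L : (a\b) ∧ (b\a) ∧ e ∈ H}. Then Θ_K is the smallest equivalence relation on L that is compatible with ∨ and ∧ and contains Θ_{H_i} for every i ∈ I; that is, Θ_K is the join of the lattice congruences Θ_{H_i} in the congruence lattice of the lattice (L, ∨, ∧). -/

import Mathlib

/-!
Let `r` be a lattice congruence containing every `Θ_{H i}`. If `x ≤ y` and `y * u₁ ⋯ uₙ ≤ x` for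
negative elements `uₖ` of `⋃ i, H i`, then `x r y`: the point `y * u₁ ⋯ uₙ₋₁ ⊔ x` is related to `x`
by a `Θ_{H i}`-step and to `y` by induction. As `(a ⊔ b) * ((a\b) ⊓ (b\a) ⊓ e) ≤ a ⊓ b`, and
`a ⊓ b r a ⊔ b` forces `a r b`, it suffices that `|x|` dominates such a product for every `x ∈ K`.
In an e-cyclic residuated lattice the elements with that property form a convex subalgebra
containing every `H i`, because `|x| |y| |x| ≤ |x y|, |x \ y|`, `|y| |x| |y| ≤ |x / y|`, and
`|x| |y| ≤ |w|` whenever `x ⊓ y ≤ w ≤ x ⊔ y`.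
-/

universe u

/-- A residuated lattice: a lattice-ordered monoid with left and right residuals.
`ldiv x z` is `x \ z` and `rdiv z y` is `z / y`. -/
class ResiduatedLattice (α : Type u) extends Lattice α, Monoid α where
  ldiv : α → α → α
  rdiv : α → α → α
  mul_le_iff_le_ldiv : ∀ x y z : α, x * y ≤ z ↔ y ≤ ldiv x z
  mul_le_iff_le_rdiv : ∀ x y z : α, x * y ≤ z ↔ x ≤ rdiv z y

namespace ResiduatedLattice

variable {α : Type u} [ResiduatedLattice α]

/-- `L` is e-cyclic if `x \ e = e / x` for all `x`. -/
def ECyclic (α : Type u) [ResiduatedLattice α] : Prop :=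
  ∀ x : α, ldiv x 1 = rdiv 1 x

/-- Absolute value: `|x| = x ⊓ (e / x) ⊓ e`. -/
def absv (x : α) : α := x ⊓ rdiv 1 x ⊓ 1

/-- A convex subalgebra: contains `e`, closed under all the operations, and order-convex. -/
structure IsConvexSubalgebra (H : Set α) : Prop where
  one_mem : (1 : α) ∈ H
  mul_mem : ∀ ⦃x⦄, x ∈ H → ∀ ⦃y⦄, y ∈ H → x * y ∈ H
  sup_mem : ∀ ⦃x⦄, x ∈ H → ∀ ⦃y⦄, y ∈ H → x ⊔ y ∈ H
  inf_mem : ∀ ⦃x⦄, x ∈ H → ∀ ⦃y⦄, y ∈ H → x ⊓ y ∈ H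
  ldiv_mem : ∀ ⦃x⦄, x ∈ H → ∀ ⦃y⦄, y ∈ H → ldiv x y ∈ H
  rdiv_mem : ∀ ⦃x⦄, x ∈ H → ∀ ⦃y⦄, y ∈ H → rdiv x y ∈ H
  convex : ∀ ⦃a⦄, a ∈ H → ∀ ⦃b⦄, b ∈ H → ∀ ⦃x⦄, a ≤ x → x ≤ b → x ∈ H

/-- `C[S]`: the smallest convex subalgebra containing `S`. -/
def convexClosure (S : Set α) : Set α :=
  ⋂₀ {H : Set α | IsConvexSubalgebra H ∧ S ⊆ H}

end ResiduatedLattice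

open ResiduatedLattice

/-- The relation `Θ_H`: `a Θ_H b` iff `(a\b) ⊓ (b\a) ⊓ e ∈ H`. -/
def theta {α : Type u} [ResiduatedLattice α] (H : Set α) (a b : α) : Prop :=
  ldiv a b ⊓ ldiv b a ⊓ 1 ∈ H

/-- Compatibility of a binary relation with the lattice operations. -/
def LatCompat {α : Type u} [ResiduatedLattice α] (r : α → α → Prop) : Prop :=
  ∀ a b c d : α, r a b → r c d → r (a ⊔ c) (b ⊔ d) ∧ r (a ⊓ c) (b ⊓ d)


namespace ResiduatedLattice

variable {α : Type u} [ResiduatedLattice α]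

lemma le_ldiv_iff {x y z : α} : y ≤ ldiv x z ↔ x * y ≤ z :=
  (mul_le_iff_le_ldiv x y z).symm

lemma le_rdiv_iff {x y z : α} : x ≤ rdiv z y ↔ x * y ≤ z :=
  (mul_le_iff_le_rdiv x y z).symm

lemma mul_ldiv_le (x y : α) : x * ldiv x y ≤ y := le_ldiv_iff.mp le_rfl

lemma rdiv_mul_le (x y : α) : rdiv x y * y ≤ x := le_rdiv_iff.mp le_rfl

instance : MulLeftMono α :=
  ⟨fun _ _ _ h => le_ldiv_iff.mp (h.trans (le_ldiv_iff.mpr le_rfl))⟩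

instance : MulRightMono α :=
  ⟨fun _ _ _ h => le_rdiv_iff.mp (h.trans (le_rdiv_iff.mpr le_rfl))⟩

protected lemma sup_mul (a b c : α) : (a ⊔ b) * c = a * c ⊔ b * c :=
  le_antisymm
    (le_rdiv_iff.mp (sup_le (le_rdiv_iff.mpr le_sup_left) (le_rdiv_iff.mpr le_sup_right)))
    (sup_le (mul_le_mul' le_sup_left le_rfl) (mul_le_mul' le_sup_right le_rfl))

protected lemma mul_sup (a b c : α) : c * (a ⊔ b) = c * a ⊔ c * b :=
  le_antisymm
    (le_ldiv_iff.mp (sup_le (le_ldiv_iff.mpr le_sup_left) (le_ldiv_iff.mpr le_sup_right)))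
    (sup_le (mul_le_mul' le_rfl le_sup_left) (mul_le_mul' le_rfl le_sup_right))

lemma mul_le_one_comm (hec : ECyclic α) {x y : α} : x * y ≤ 1 ↔ y * x ≤ 1 := by
  rw [← le_ldiv_iff, hec, le_rdiv_iff]

lemma le_one_of_mem_closure {S : Set α} (hS : ∀ u ∈ S, u ≤ 1) {p : α}
    (hp : p ∈ Submonoid.closure S) : p ≤ 1 := by
  induction hp using Submonoid.closure_induction with
  | mem u hu => exact hS u hu
  | one => exact le_rfl
  | mul p q _ _ hp hq => exact mul_le_one' hp hq

lemma absv_le_self (x : α) : absv x ≤ x := inf_le_left.trans inf_le_left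

lemma absv_le_one (x : α) : absv x ≤ 1 := inf_le_right

lemma absv_mul_le_one (x : α) : absv x * x ≤ 1 :=
  le_rdiv_iff.mp (inf_le_left.trans inf_le_right)

lemma mul_absv_le_one (hec : ECyclic α) (x : α) : x * absv x ≤ 1 :=
  (mul_le_one_comm hec).mp (absv_mul_le_one x)

lemma le_absv_iff {x z : α} : z ≤ absv x ↔ z ≤ x ∧ z * x ≤ 1 ∧ z ≤ 1 := by
  simp only [absv, le_inf_iff, le_rdiv_iff, and_assoc]

lemma absv_one : absv (1 : α) = 1 :=
  le_antisymm (absv_le_one 1) (le_absv_iff.mpr ⟨le_rfl, (one_mul 1).le, le_rfl⟩)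

lemma absv_mul_absv_mul_absv_le_absv_mul (x y : α) :
    absv x * absv y * absv x ≤ absv (x * y) := by
  refine le_absv_iff.mpr ⟨?_, ?_, ?_⟩
  · exact mul_le_of_le_of_le_one (mul_le_mul' (absv_le_self x) (absv_le_self y)) (absv_le_one x)
  · calc absv x * absv y * absv x * (x * y) = absv x * (absv y * (absv x * x * y)) := by
          simp only [mul_assoc]
      _ ≤ absv x * (absv y * y) :=
          mul_le_mul' le_rfl (mul_le_mul' le_rfl (mul_le_of_le_one_left' (absv_mul_le_one x)))
      _ ≤ 1 := mul_le_one' (absv_le_one x) (absv_mul_le_one y)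
  · exact mul_le_one' (mul_le_one' (absv_le_one x) (absv_le_one y)) (absv_le_one x)

lemma absv_mul_absv_mul_absv_le_absv_ldiv (hec : ECyclic α) (x y : α) :
    absv x * absv y * absv x ≤ absv (ldiv x y) := by
  refine le_absv_iff.mpr ⟨le_ldiv_iff.mpr ?_, ?_, ?_⟩
  · calc x * (absv x * absv y * absv x) = x * absv x * absv y * absv x := by
          simp only [mul_assoc]
      _ ≤ 1 * y * 1 :=
          mul_le_mul' (mul_le_mul' (mul_absv_le_one hec x) (absv_le_self y)) (absv_le_one x)
      _ = y := by rw [one_mul, mul_one]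
  · have hx : absv x * ldiv x y ≤ y := (mul_le_mul' (absv_le_self x) le_rfl).trans (mul_ldiv_le x y)
    calc absv x * absv y * absv x * ldiv x y = absv x * (absv y * (absv x * ldiv x y)) := by
          simp only [mul_assoc]
      _ ≤ absv x * (absv y * y) := mul_le_mul' le_rfl (mul_le_mul' le_rfl hx)
      _ ≤ 1 := mul_le_one' (absv_le_one x) (absv_mul_le_one y)
  · exact mul_le_one' (mul_le_one' (absv_le_one x) (absv_le_one y)) (absv_le_one x)

lemma absv_mul_absv_mul_absv_le_absv_rdiv (hec : ECyclic α) (x y : α) :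
    absv y * absv x * absv y ≤ absv (rdiv x y) := by
  refine le_absv_iff.mpr ⟨le_rdiv_iff.mpr ?_, (mul_le_one_comm hec).mpr ?_, ?_⟩
  · calc absv y * absv x * absv y * y = absv y * absv x * (absv y * y) := mul_assoc _ _ _
      _ ≤ 1 * x * 1 :=
          mul_le_mul' (mul_le_mul' (absv_le_one y) (absv_le_self x)) (absv_mul_le_one y)
      _ = x := by rw [one_mul, mul_one]
  · have hy : rdiv x y * absv y ≤ x := (mul_le_mul' le_rfl (absv_le_self y)).trans (rdiv_mul_le x y)
    calc rdiv x y * (absv y * absv x * absv y) = rdiv x y * absv y * absv x * absv y := by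
          simp only [mul_assoc]
      _ ≤ x * absv x * 1 := mul_le_mul' (mul_le_mul' hy le_rfl) (absv_le_one y)
      _ ≤ 1 := by rw [mul_one]; exact mul_absv_le_one hec x
  · exact mul_le_one' (mul_le_one' (absv_le_one y) (absv_le_one x)) (absv_le_one y)

lemma absv_mul_absv_le_absv_of_inf_le_of_le_sup {x y w : α} (hw : x ⊓ y ≤ w) (hw' : w ≤ x ⊔ y) :
    absv x * absv y ≤ absv w := by
  have hx : absv x * absv y ≤ absv x := mul_le_of_le_one_right' (absv_le_one y)
  have hy : absv x * absv y ≤ absv y := mul_le_of_le_one_left' (absv_le_one x)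
  refine le_absv_iff.mpr ⟨?_, ?_, hx.trans (absv_le_one x)⟩
  · exact (le_inf (hx.trans (absv_le_self x)) (hy.trans (absv_le_self y))).trans hw
  · calc absv x * absv y * w ≤ absv x * absv y * (x ⊔ y) := mul_le_mul' le_rfl hw'
      _ = absv x * absv y * x ⊔ absv x * absv y * y := ResiduatedLattice.mul_sup _ _ _
      _ ≤ 1 := sup_le ((mul_le_mul' hx le_rfl).trans (absv_mul_le_one x))
          ((mul_le_mul' hy le_rfl).trans (absv_mul_le_one y))

lemma IsConvexSubalgebra.mem_of_le_of_le_one {H : Set α} (hH : IsConvexSubalgebra H) {x y : α}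
    (hx : x ∈ H) (hxy : x ≤ y) (hy : y ≤ 1) : y ∈ H :=
  hH.convex hx hH.one_mem hxy hy

lemma IsConvexSubalgebra.absv_mem {H : Set α} (hH : IsConvexSubalgebra H) {x : α}
    (hx : x ∈ H) : absv x ∈ H :=
  hH.inf_mem (hH.inf_mem hx (hH.rdiv_mem hH.one_mem hx)) hH.one_mem

lemma isConvexSubalgebra_convexClosure (S : Set α) : IsConvexSubalgebra (convexClosure S) where
  one_mem := fun _ hT => hT.1.one_mem
  mul_mem := fun _ hx _ hy T hT => hT.1.mul_mem (hx T hT) (hy T hT)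
  sup_mem := fun _ hx _ hy T hT => hT.1.sup_mem (hx T hT) (hy T hT)
  inf_mem := fun _ hx _ hy T hT => hT.1.inf_mem (hx T hT) (hy T hT)
  ldiv_mem := fun _ hx _ hy T hT => hT.1.ldiv_mem (hx T hT) (hy T hT)
  rdiv_mem := fun _ hx _ hy T hT => hT.1.rdiv_mem (hx T hT) (hy T hT)
  convex := fun _ ha _ hb _ hax hxb T hT => hT.1.convex (ha T hT) (hb T hT) hax hxb

lemma subset_convexClosure (S : Set α) : S ⊆ convexClosure S :=
  fun _ hx _ hT => hT.2 hx

lemma convexClosure_subset {S W : Set α} (hW : IsConvexSubalgebra W) (hSW : S ⊆ W) :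
    convexClosure S ⊆ W :=
  fun _ hx => hx W ⟨hW, hSW⟩

def prodHull (T : Set α) : Set α :=
  {x | ∃ p ∈ Submonoid.closure {u | u ∈ T ∧ u ≤ 1}, p ≤ absv x}

lemma isConvexSubalgebra_prodHull (hec : ECyclic α) (T : Set α) :
    IsConvexSubalgebra (prodHull T) where
  one_mem := ⟨1, Submonoid.one_mem _, absv_one.ge⟩
  mul_mem := by
    rintro x ⟨p, hp, hpx⟩ y ⟨q, hq, hqy⟩
    exact ⟨p * q * p, Submonoid.mul_mem _ (Submonoid.mul_mem _ hp hq) hp,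
      (mul_le_mul' (mul_le_mul' hpx hqy) hpx).trans (absv_mul_absv_mul_absv_le_absv_mul x y)⟩
  sup_mem := by
    rintro x ⟨p, hp, hpx⟩ y ⟨q, hq, hqy⟩
    exact ⟨p * q, Submonoid.mul_mem _ hp hq, (mul_le_mul' hpx hqy).trans
      (absv_mul_absv_le_absv_of_inf_le_of_le_sup inf_le_sup le_rfl)⟩
  inf_mem := by
    rintro x ⟨p, hp, hpx⟩ y ⟨q, hq, hqy⟩
    exact ⟨p * q, Submonoid.mul_mem _ hp hq, (mul_le_mul' hpx hqy).trans
      (absv_mul_absv_le_absv_of_inf_le_of_le_sup le_rfl inf_le_sup)⟩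
  ldiv_mem := by
    rintro x ⟨p, hp, hpx⟩ y ⟨q, hq, hqy⟩
    exact ⟨p * q * p, Submonoid.mul_mem _ (Submonoid.mul_mem _ hp hq) hp,
      (mul_le_mul' (mul_le_mul' hpx hqy) hpx).trans
        (absv_mul_absv_mul_absv_le_absv_ldiv hec x y)⟩
  rdiv_mem := by
    rintro x ⟨p, hp, hpx⟩ y ⟨q, hq, hqy⟩
    exact ⟨q * p * q, Submonoid.mul_mem _ (Submonoid.mul_mem _ hq hp) hq,
      (mul_le_mul' (mul_le_mul' hqy hpx) hqy).trans
        (absv_mul_absv_mul_absv_le_absv_rdiv hec x y)⟩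
  convex := by
    rintro a ⟨p, hp, hpa⟩ b ⟨q, hq, hqb⟩ x hax hxb
    exact ⟨p * q, Submonoid.mul_mem _ hp hq, (mul_le_mul' hpa hqb).trans
      (absv_mul_absv_le_absv_of_inf_le_of_le_sup (inf_le_left.trans hax) (hxb.trans le_sup_right))⟩

lemma convexClosure_subset_prodHull (hec : ECyclic α) {T : Set α}
    (hT : ∀ x ∈ T, absv x ∈ T) : convexClosure T ⊆ prodHull T :=
  convexClosure_subset (isConvexSubalgebra_prodHull hec T) fun x hx =>
    ⟨absv x, Submonoid.subset_closure ⟨hT x hx, absv_le_one x⟩, le_rfl⟩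

section Theta

def bires (a b : α) : α := ldiv a b ⊓ ldiv b a ⊓ 1

lemma bires_le_one (a b : α) : bires a b ≤ 1 := inf_le_right

lemma mul_bires_le (a b : α) : a * bires a b ≤ b :=
  le_ldiv_iff.mp (inf_le_left.trans inf_le_left)

lemma mul_bires_le' (a b : α) : b * bires a b ≤ a :=
  le_ldiv_iff.mp (inf_le_left.trans inf_le_right)

lemma le_bires_iff {a b z : α} : z ≤ bires a b ↔ a * z ≤ b ∧ b * z ≤ a ∧ z ≤ 1 := by
  simp only [bires, le_inf_iff, le_ldiv_iff, and_assoc]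

lemma bires_comm (a b : α) : bires a b = bires b a := by
  rw [bires, bires, inf_comm (ldiv a b)]

lemma bires_self (a : α) : bires a a = 1 :=
  le_antisymm (bires_le_one a a) (le_bires_iff.mpr ⟨(mul_one a).le, (mul_one a).le, le_rfl⟩)

lemma sup_mul_bires_le_inf (a b : α) : (a ⊔ b) * bires a b ≤ a ⊓ b := by
  rw [ResiduatedLattice.sup_mul]
  exact sup_le (le_inf (mul_le_of_le_one_right' (bires_le_one a b)) (mul_bires_le a b))
    (le_inf (mul_bires_le' a b) (mul_le_of_le_one_right' (bires_le_one a b)))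

lemma bires_mul_bires_mul_bires_le (a b c : α) :
    bires a b * bires b c * bires a b ≤ bires a c := by
  refine le_bires_iff.mpr ⟨?_, ?_, ?_⟩
  · calc a * (bires a b * bires b c * bires a b) = a * bires a b * bires b c * bires a b := by
          simp only [mul_assoc]
      _ ≤ c := mul_le_of_le_of_le_one
          ((mul_le_mul' (mul_bires_le a b) le_rfl).trans (mul_bires_le b c)) (bires_le_one a b)
  · calc c * (bires a b * bires b c * bires a b) = c * bires a b * bires b c * bires a b := by
          simp only [mul_assoc]
      _ ≤ c * bires b c * bires a b :=
          mul_le_mul' (mul_le_mul' (mul_le_of_le_one_right' (bires_le_one a b)) le_rfl) le_rfl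
      _ ≤ a := (mul_le_mul' (mul_bires_le' b c) le_rfl).trans (mul_bires_le' a b)
  · exact mul_le_one' (mul_le_one' (bires_le_one a b) (bires_le_one b c)) (bires_le_one a b)

lemma bires_le_bires_sup (a b c : α) : bires a b ≤ bires (a ⊔ c) (b ⊔ c) := by
  have hc : c * bires a b ≤ c := mul_le_of_le_one_right' (bires_le_one a b)
  refine le_bires_iff.mpr ⟨?_, ?_, bires_le_one a b⟩ <;> rw [ResiduatedLattice.sup_mul]
  · exact sup_le_sup (mul_bires_le a b) hc
  · exact sup_le_sup (mul_bires_le' a b) hc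

lemma bires_le_bires_inf (a b c : α) : bires a b ≤ bires (a ⊓ c) (b ⊓ c) := by
  have hc (x : α) : (x ⊓ c) * bires a b ≤ c :=
    mul_le_of_le_of_le_one inf_le_right (bires_le_one a b)
  refine le_bires_iff.mpr ⟨le_inf ?_ (hc a), le_inf ?_ (hc b), bires_le_one a b⟩
  · exact (mul_le_mul' inf_le_left le_rfl).trans (mul_bires_le a b)
  · exact (mul_le_mul' inf_le_left le_rfl).trans (mul_bires_le' a b)

variable {H : Set α}

lemma theta_of_bires_le (hH : IsConvexSubalgebra H) {a b c d : α}
    (h : bires a b ≤ bires c d) (hab : theta H a b) : theta H c d :=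
  hH.mem_of_le_of_le_one hab h (bires_le_one c d)

lemma theta_equivalence (hH : IsConvexSubalgebra H) : Equivalence (theta H) where
  refl a := by
    change bires a a ∈ H
    rw [bires_self]
    exact hH.one_mem
  symm {a b} h := by
    change bires b a ∈ H
    rwa [bires_comm]
  trans {a b c} hab hbc :=
    hH.mem_of_le_of_le_one (hH.mul_mem (hH.mul_mem hab hbc) hab)
      (bires_mul_bires_mul_bires_le a b c) (bires_le_one a c)

lemma theta_latCompat (hH : IsConvexSubalgebra H) : LatCompat (theta H) := by
  intro a b c d hab hcd
  constructor
  · refine (theta_equivalence hH).trans (theta_of_bires_le hH (bires_le_bires_sup a b c) hab) ?_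
    simpa only [sup_comm b] using theta_of_bires_le hH (bires_le_bires_sup c d b) hcd
  · refine (theta_equivalence hH).trans (theta_of_bires_le hH (bires_le_bires_inf a b c) hab) ?_
    simpa only [inf_comm b] using theta_of_bires_le hH (bires_le_bires_inf c d b) hcd

lemma theta_of_mul_le (hH : IsConvexSubalgebra H) {u x y : α} (hu : u ∈ H) (hu1 : u ≤ 1)
    (hxy : x ≤ y) (h : y * u ≤ x) : theta H x y :=
  hH.mem_of_le_of_le_one hu
    (le_bires_iff.mpr ⟨(mul_le_of_le_one_right' hu1).trans hxy, h, hu1⟩) (bires_le_one x y)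

end Theta

section Congruence

variable {r : α → α → Prop}

lemma rel_of_rel_inf_sup (hr : Equivalence r) (hc : LatCompat r) {a b : α}
    (h : r (a ⊓ b) (a ⊔ b)) : r a b := by
  have ha : r a (a ⊔ b) := by simpa using (hc _ _ _ _ h (hr.refl a)).1
  have hb : r b (a ⊔ b) := by simpa using (hc _ _ _ _ h (hr.refl b)).1
  exact hr.trans ha (hr.symm hb)

lemma rel_of_mul_le_of_mem_closure (hr : Equivalence r) {S : Set α} (hS : ∀ u ∈ S, u ≤ 1)
    (hrS : ∀ u ∈ S, ∀ x y, x ≤ y → y * u ≤ x → r x y) {p : α}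
    (hp : p ∈ Submonoid.closure S) : ∀ x y, x ≤ y → y * p ≤ x → r x y := by
  induction hp using Submonoid.closure_induction with
  | mem u hu => exact hrS u hu
  | one =>
    intro x y hxy h
    rw [mul_one] at h
    exact le_antisymm hxy h ▸ hr.refl x
  | mul p q hp hq ihp ihq =>
    intro x y hxy h
    have hmy : r (y * p ⊔ x) y :=
      ihp _ _ (sup_le (mul_le_of_le_one_right' (le_one_of_mem_closure hS hp)) hxy) le_sup_left
    have hxm : r x (y * p ⊔ x) := by
      refine ihq _ _ le_sup_right ?_
      rw [ResiduatedLattice.sup_mul, mul_assoc]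
      exact sup_le h (mul_le_of_le_one_right' (le_one_of_mem_closure hS hq))
    exact hr.trans hxm hmy

end Congruence

end ResiduatedLattice

/-- `Θ_K`, for `K` the join of the convex subalgebras `H i`, is the
smallest lattice congruence containing every `Θ_{H i}`. -/
theorem stmt6 {α : Type u} [ResiduatedLattice α] {ι : Type*} (hec : ECyclic α)
    (H : ι → Set α) (hH : ∀ i, IsConvexSubalgebra (H i))
    (K : Set α) (hK : K = convexClosure (⋃ i, H i)) :
    Equivalence (theta K) ∧ LatCompat (theta K) ∧
    (∀ i, ∀ a b : α, theta (H i) a b → theta K a b) ∧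
    (∀ r : α → α → Prop, Equivalence r → LatCompat r →
      (∀ i, ∀ a b : α, theta (H i) a b → r a b) →
      ∀ a b : α, theta K a b → r a b) := by
  subst hK
  have hK := isConvexSubalgebra_convexClosure (⋃ i, H i)
  refine ⟨theta_equivalence hK, theta_latCompat hK,
    fun i a b hab => subset_convexClosure _ (Set.mem_iUnion_of_mem i hab), ?_⟩
  intro r hr hrc hrH a b hab
  have habsv (x : α) (hx : x ∈ ⋃ i, H i) : absv x ∈ ⋃ i, H i := by
    obtain ⟨i, hi⟩ := Set.mem_iUnion.mp hx
    exact Set.mem_iUnion_of_mem i ((hH i).absv_mem hi)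
  obtain ⟨p, hp, hpab⟩ := convexClosure_subset_prodHull hec habsv hab
  have hstep (u : α) (hu : u ∈ {u | u ∈ ⋃ i, H i ∧ u ≤ 1}) (x y : α) (hxy : x ≤ y)
      (h : y * u ≤ x) : r x y := by
    obtain ⟨i, hi⟩ := Set.mem_iUnion.mp hu.1
    exact hrH i x y (theta_of_mul_le (hH i) hi hu.2 hxy h)
  refine rel_of_rel_inf_sup hr hrc
    (rel_of_mul_le_of_mem_closure hr (fun u hu => hu.2) hstep hp _ _ inf_le_sup ?_)
  exact (mul_le_mul' le_rfl (hpab.trans (absv_le_self _))).trans (sup_mul_bires_le_inf a b)
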